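/- For every nonempty word 𝔴 and every p ∈ {1,2,3}, the vector v_p(𝔴) = (b,c) ∈ ℤ^2 is primitive, i.e., gcd(|b|,|c|) = 1. Moreover, if p is the last letter of 𝔴, then v_p(𝔴) is generic, i.e., b ≠ 0, c ≠ 0, and b + c ≠ 0. -/

import Mathlib

open MvPolynomial

noncomputable section

abbrev Vec3 := Fin 3 → ℤ

/-- The symmetric Cartan matrix entries determined by `c12, c13, c23`. -/
def cart (c12 c13 c23 : ℤ) (p q : Fin 3) : ℤ :=
  if p = q then 2
  else if (p = 0 ∧ q = 1) ∨ (p = 1 ∧ q = 0) then -c12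
  else if (p = 0 ∧ q = 2) ∨ (p = 2 ∧ q = 0) then -c13
  else -c23

/-- Off-diagonal positive entries `c_pq`. -/
def cOf (c12 c13 c23 : ℤ) (p q : Fin 3) : ℤ :=
  if (p = 0 ∧ q = 1) ∨ (p = 1 ∧ q = 0) then c12
  else if (p = 0 ∧ q = 2) ∨ (p = 2 ∧ q = 0) then c13
  else c23

/-- standard basis vectors α_p of ℤ^3 -/
def alpha (p : Fin 3) : Vec3 := Pi.single p 1

/-- the symmetric bilinear form with (α_p, α_q) given by the Cartan matrix -/
def bform (c12 c13 c23 : ℤ) (v w : Vec3) : ℤ :=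
  ∑ p, ∑ q, v p * cart c12 c13 c23 p q * w q

/-- simple reflection s_p -/
def srefl (c12 c13 c23 : ℤ) (p : Fin 3) (v : Vec3) : Vec3 :=
  v - (bform c12 c13 c23 v (alpha p)) • alpha p

/-- s_𝔴 for a word 𝔴 = i₁⋯i_k : the composite s_{i₁}∘⋯∘s_{i_k} -/
def sWord (c12 c13 c23 : ℤ) (w : List (Fin 3)) (v : Vec3) : Vec3 :=
  w.foldr (fun p u => srefl c12 c13 c23 p u) v

/-- a word is acyclic if it is a prefix of 123123⋯ (letters 0,1,2 here) or of 321321⋯ -/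
def Acyclic (w : List (Fin 3)) : Prop :=
  (∀ t < w.length, w.getD t 0 = (Fin.ofNat 3 t)) ∨
  (∀ t < w.length, w.getD t 0 = -((Fin.ofNat 3 t) + 1))

/-- the length of the longest acyclic prefix -/
def rho (w : List (Fin 3)) : ℕ :=
  @Nat.findGreatest (fun p => Acyclic (w.take p)) (Classical.decPred _) w.length

/-- initial exchange matrix -/
def B0 (c12 c13 c23 : ℤ) : Matrix (Fin 3) (Fin 3) ℤ :=
  !![0, c12, c13; -c12, 0, c23; -c13, -c23, 0]

/-- matrix mutation μ_k -/
def mutMat (k : Fin 3) (b : Matrix (Fin 3) (Fin 3) ℤ) : Matrix (Fin 3) (Fin 3) ℤ :=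
  Matrix.of fun p q =>
    if p = k ∨ q = k then - b p q
    else b p q + (b p k).sign * max (b p k * b k q) 0

/-- mutated exchange matrix B(𝔴) -/
def BW (c12 c13 c23 : ℤ) (w : List (Fin 3)) : Matrix (Fin 3) (Fin 3) ℤ :=
  w.foldl (fun m k => mutMat k m) (B0 c12 c13 c23)

/-- c_pq(𝔴) = |b_pq(𝔴)| -/
def cW (c12 c13 c23 : ℤ) (w : List (Fin 3)) (p q : Fin 3) : ℤ :=
  |BW c12 c13 c23 w p q|

/-- the ambient field F, the fraction field of ℚ[x₁,x₂,x₃] -/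
abbrev FF := FractionRing (MvPolynomial (Fin 3) ℚ)

/-- the initial cluster variables x_p inside F -/
def xv (p : Fin 3) : FF := algebraMap (MvPolynomial (Fin 3) ℚ) FF (X p)

/-- seed mutation on the cluster -/
def mutClus (k : Fin 3) (b : Matrix (Fin 3) (Fin 3) ℤ) (z : Fin 3 → FF) : Fin 3 → FF :=
  fun p =>
    if p = k then
      ((∏ q, z q ^ (max (b q k) 0).toNat) + (∏ q, z q ^ (max (-(b q k)) 0).toNat)) / z k
    else z p

/-- seed mutation -/
def mutSeed (s : Matrix (Fin 3) (Fin 3) ℤ × (Fin 3 → FF)) (k : Fin 3) :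
    Matrix (Fin 3) (Fin 3) ℤ × (Fin 3 → FF) :=
  (mutMat k s.1, mutClus k s.1 s.2)

/-- the seed Ξ(𝔴) obtained from the initial seed by mutating along 𝔴 -/
def Xi (c12 c13 c23 : ℤ) (w : List (Fin 3)) : Matrix (Fin 3) (Fin 3) ℤ × (Fin 3 → FF) :=
  w.foldl mutSeed (B0 c12 c13 c23, xv)

open Classical in
/-- the order of vanishing of z ∈ F at the prime x_q : the unique m with
    z = x_q^m · f/g, f,g prime to x_q (0 if no such m, e.g. z = 0). -/
def ordAt (q : Fin 3) (z : FF) : ℤ :=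
  if h : ∃ m : ℤ, ∃ f g : MvPolynomial (Fin 3) ℚ, ¬ (X q ∣ f) ∧ ¬ (X q ∣ g) ∧ g ≠ 0 ∧
      z = (xv q) ^ m * (algebraMap (MvPolynomial (Fin 3) ℚ) FF f) /
            (algebraMap (MvPolynomial (Fin 3) ℚ) FF g)
  then h.choose else 0

/-- the denominator vector β_p(𝔴) of the p-th cluster variable of Ξ(𝔴) -/
def betaP (c12 c13 c23 : ℤ) (w : List (Fin 3)) (p : Fin 3) : Vec3 :=
  fun q => - ordAt q ((Xi c12 c13 c23 w).2 p)

abbrev V2 := ℤ × ℤ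

def Vbase (p : Fin 3) : V2 × V2 × V2 :=
  if p = 0 then ((-1,2), (-1,1), (0,1))
  else if p = 1 then ((0,1), (1,1), (1,0))
  else ((1,0), (1,-1), (2,-1))

def Vstep (t : V2 × V2 × V2) (p : Fin 3) : V2 × V2 × V2 :=
  if p = 0 then (t.2.1 + t.2.2, t.2.1, t.2.2)
  else if p = 1 then (t.1, t.1 + t.2.2, t.2.2)
  else (t.1, t.2.1, t.1 + t.2.1)

/-- the triple V(𝔴) = (v₁(𝔴), v₂(𝔴), v₃(𝔴)) -/
def VW : List (Fin 3) → V2 × V2 × V2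
  | [] => ((0,0),(0,0),(0,0))
  | i :: r => r.foldl Vstep (Vbase i)

/-- the component v_p(𝔴) of V(𝔴) -/
def vComp (p : Fin 3) (t : V2 × V2 × V2) : V2 :=
  if p = 0 then t.1 else if p = 1 then t.2.1 else t.2.2

/-- (b,c) is generic: b ≠ 0, c ≠ 0, b + c ≠ 0 -/
def Generic (v : V2) : Prop := v.1 ≠ 0 ∧ v.2 ≠ 0 ∧ v.1 + v.2 ≠ 0

/-- (b,c) is primitive: gcd(|b|,|c|) = 1 -/
def Primitive (v : V2) : Prop := Int.gcd v.1 v.2 = 1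

/-- the crossing times ℓ/|n|, ℓ = 1, …, |n|-1, tagged with a letter -/
def marks (n : ℤ) (letter : Fin 3) : List (ℚ × Fin 3) :=
  ((List.range n.natAbs).drop 1).map (fun ℓ => ((ℓ : ℚ) / (n.natAbs : ℚ), letter))

/-- the crossing word υ(b,c) of the segment from (0,0) to (b,c) : letters recorded at
    the crossings with the lines y ∈ ℤ (letter 1), x+y ∈ ℤ (letter 2), x ∈ ℤ (letter 3),
    listed in increasing order of the time parameter. -/
def upsWord (b c : ℤ) : List (Fin 3) :=
  ((marks c 0 ++ marks (b + c) 1 ++ marks b 2).mergeSort (fun s t => s.1 ≤ t.1)).map Prod.snd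

/-- β(b,c) = s_{j₁}⋯s_{j_h}(α_{j_{h+1}}) where υ(b,c) = j₁⋯j_{2h+1} -/
def betaVec (c12 c13 c23 : ℤ) (v : V2) : Vec3 :=
  sWord c12 c13 c23 ((upsWord v.1 v.2).take ((upsWord v.1 v.2).length / 2))
    (alpha ((upsWord v.1 v.2).getD ((upsWord v.1 v.2).length / 2) 0))

/-- φ(𝔳) = β(v_p(𝔳)) where p is the last letter of 𝔳 -/
def phi (c12 c13 c23 : ℤ) (w : List (Fin 3)) : Vec3 :=
  betaVec c12 c13 c23 (vComp (w.getLastD 0) (VW w))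

/-- ψ(ŵ), where ŵ = 𝔴𝔳 with 𝔴 the longest acyclic prefix of ŵ -/
def psi (c12 c13 c23 : ℤ) (w : List (Fin 3)) : Vec3 :=
  if w.drop (rho w) = [] then
    sWord c12 c13 c23 (w.take (rho w)).dropLast (alpha ((w.take (rho w)).getLastD 0))
  else
    sWord c12 c13 c23 (w.take (rho w)) (phi c12 c13 c23 (w.drop (rho w)))


/-- the word (ab)^n : n copies of the two-letter word ab -/
def rep2 (a b : Fin 3) (n : ℕ) : List (Fin 3) := (List.replicate n [a, b]).flatten

/-!
Each step replaces one vector of the triple by the sum of the other two. This changes the pairwise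
determinants at most by a sign, and they are `±1` for the initial triples, so every `v_p` is
primitive.

For genericity, the lines `b = 0` and `c = 0` cut the half-plane `b + c ≥ 0` into three closed
sectors. The whole triple lies in one of them, with the vector of the last letter in its interior.
As consecutive letters differ, the new vector is that interior vector plus a vector of the closed
sector, so the invariant persists; and vectors in the interior of a sector are generic.
-/

def det2 (u v : V2) : ℤ := u.1 * v.2 - u.2 * v.1

@[simp] lemma det2_self (u : V2) : det2 u u = 0 := by
  simp only [det2]; ring

@[simp] lemma det2_add_left (u v w : V2) : det2 (u + v) w = det2 u w + det2 v w := by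
  simp only [det2, Prod.fst_add, Prod.snd_add]; ring

@[simp] lemma det2_add_right (u v w : V2) : det2 u (v + w) = det2 u v + det2 u w := by
  simp only [det2, Prod.fst_add, Prod.snd_add]; ring

lemma det2_swap (u v : V2) : det2 v u = -det2 u v := by
  simp only [det2]; ring

lemma primitive_of_isUnit_det2 {u v : V2} (h : IsUnit (det2 u v)) : Primitive u := by
  rw [Primitive, ← Int.isCoprime_iff_gcd_eq_one]
  rcases Int.isUnit_iff.mp h with h | h
  · exact ⟨v.2, -v.1, by rw [det2] at h; linarith⟩
  · exact ⟨-v.2, v.1, by rw [det2] at h; linarith⟩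

lemma vComp_vstep_self (t : V2 × V2 × V2) (q : Fin 3) :
    vComp q (Vstep t q) = ∑ r, vComp r t - vComp q t := by
  fin_cases q <;> simp [Vstep, vComp, Fin.sum_univ_three] <;> abel

lemma vComp_vstep_of_ne (t : V2 × V2 × V2) {q r : Fin 3} (h : r ≠ q) :
    vComp r (Vstep t q) = vComp r t := by
  fin_cases q <;> fin_cases r <;> simp_all [Vstep, vComp]

def IsUnimodularTriple (t : V2 × V2 × V2) : Prop :=
  IsUnit (det2 t.1 t.2.1) ∧ IsUnit (det2 t.1 t.2.2) ∧ IsUnit (det2 t.2.1 t.2.2)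

lemma isUnimodularTriple_vbase (p : Fin 3) : IsUnimodularTriple (Vbase p) := by
  fin_cases p <;> simp [IsUnimodularTriple, Vbase, det2]

lemma IsUnimodularTriple.vstep {t : V2 × V2 × V2} (h : IsUnimodularTriple t) (q : Fin 3) :
    IsUnimodularTriple (Vstep t q) := by
  obtain ⟨h12, h13, h23⟩ := h
  fin_cases q <;>
    simp [IsUnimodularTriple, Vstep, det2_swap t.2.1 t.2.2, det2_swap t.1 t.2.1, *]

lemma IsUnimodularTriple.foldl_vstep {t : V2 × V2 × V2} (h : IsUnimodularTriple t)
    (r : List (Fin 3)) : IsUnimodularTriple (r.foldl Vstep t) := by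
  induction r generalizing t with
  | nil => exact h
  | cons q r ih => exact ih (h.vstep q)

lemma IsUnimodularTriple.primitive_vComp {t : V2 × V2 × V2} (h : IsUnimodularTriple t)
    (p : Fin 3) : Primitive (vComp p t) := by
  obtain ⟨h12, h13, -⟩ := h
  fin_cases p
  · exact primitive_of_isUnit_det2 h12
  · exact primitive_of_isUnit_det2 (v := t.1) (by rwa [det2_swap, IsUnit.neg_iff])
  · exact primitive_of_isUnit_det2 (v := t.1) (by rwa [det2_swap, IsUnit.neg_iff])

lemma isUnimodularTriple_VW {w : List (Fin 3)} (hne : w ≠ []) : IsUnimodularTriple (VW w) := by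
  obtain ⟨i, r, rfl⟩ := List.exists_cons_of_ne_nil hne
  exact (isUnimodularTriple_vbase i).foldl_vstep r

/-- `s = (-1, 1), (1, 1), (1, -1)` give the three closed sectors of the half-plane `b + c ≥ 0`. -/
def closedSector (s : ℤ × ℤ) : AddSubmonoid V2 where
  carrier := {v | 0 ≤ s.1 * v.1 ∧ 0 ≤ s.2 * v.2 ∧ 0 ≤ v.1 + v.2}
  add_mem' := by
    rintro u v ⟨hu₁, hu₂, hu₃⟩ ⟨hv₁, hv₂, hv₃⟩
    simp only [Set.mem_ofPred_eq, Prod.fst_add, Prod.snd_add, mul_add]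
    omega
  zero_mem' := by simp

def openSector (s : ℤ × ℤ) : Set V2 := {v | 0 < s.1 * v.1 ∧ 0 < s.2 * v.2 ∧ 0 < v.1 + v.2}

lemma openSector_subset_closedSector (s : ℤ × ℤ) : openSector s ⊆ closedSector s :=
  fun _ ⟨h₁, h₂, h₃⟩ => ⟨h₁.le, h₂.le, h₃.le⟩

lemma add_mem_openSector {s : ℤ × ℤ} {u v : V2} (hu : u ∈ openSector s)
    (hv : v ∈ closedSector s) : u + v ∈ openSector s := by
  obtain ⟨hu₁, hu₂, hu₃⟩ := hu
  obtain ⟨hv₁, hv₂, hv₃⟩ := hv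
  simp only [openSector, Set.mem_ofPred_eq, Prod.fst_add, Prod.snd_add, mul_add]
  omega

lemma generic_of_mem_openSector {s : ℤ × ℤ} {v : V2} (h : v ∈ openSector s) : Generic v := by
  obtain ⟨h₁, h₂, h₃⟩ := h
  refine ⟨?_, ?_, h₃.ne'⟩ <;> rintro h₀ <;> simp [h₀] at h₁ h₂

def IsSectorTriple (p : Fin 3) (t : V2 × V2 × V2) : Prop :=
  ∃ s, vComp p t ∈ openSector s ∧ ∀ q, vComp q t ∈ closedSector s

lemma isSectorTriple_vbase (p : Fin 3) : IsSectorTriple p (Vbase p) := by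
  fin_cases p
  · refine ⟨(-1, 1), ?_, fun q => ?_⟩
    · simp [openSector, Vbase, vComp]
    · fin_cases q <;> simp [closedSector, Vbase, vComp]
  · refine ⟨(1, 1), ?_, fun q => ?_⟩
    · simp [openSector, Vbase, vComp]
    · fin_cases q <;> simp [closedSector, Vbase, vComp]
  · refine ⟨(1, -1), ?_, fun q => ?_⟩
    · simp [openSector, Vbase, vComp]
    · fin_cases q <;> simp [closedSector, Vbase, vComp]

lemma IsSectorTriple.vstep {p q : Fin 3} {t : V2 × V2 × V2} (h : IsSectorTriple p t)
    (hqp : q ≠ p) : IsSectorTriple q (Vstep t q) := by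
  obtain ⟨s, hp, hall⟩ := h
  have hq : vComp q (Vstep t q) ∈ openSector s := by
    rw [vComp_vstep_self, ← Finset.sum_erase_eq_sub (Finset.mem_univ q),
      ← Finset.add_sum_erase _ _ (Finset.mem_erase.2 ⟨hqp.symm, Finset.mem_univ p⟩)]
    exact add_mem_openSector hp (sum_mem fun r _ => hall r)
  refine ⟨s, hq, fun r => ?_⟩
  by_cases hrq : r = q
  · subst hrq
    exact openSector_subset_closedSector s hq
  · exact vComp_vstep_of_ne t hrq ▸ hall r

lemma IsSectorTriple.foldl_vstep {p : Fin 3} {t : V2 × V2 × V2} (h : IsSectorTriple p t)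
    (r : List (Fin 3)) (hr : (p :: r).IsChain (· ≠ ·)) :
    IsSectorTriple ((p :: r).getLast (List.cons_ne_nil p r)) (r.foldl Vstep t) := by
  induction r generalizing p t with
  | nil => exact h
  | cons q r ih =>
    rw [List.isChain_cons_cons] at hr
    simpa only [List.foldl_cons, List.getLast_cons_cons] using ih (h.vstep hr.1.symm) hr.2

lemma isSectorTriple_VW {w : List (Fin 3)} (hw : w.IsChain (· ≠ ·)) (hne : w ≠ []) :
    IsSectorTriple (w.getLast hne) (VW w) := by
  obtain ⟨i, r, rfl⟩ := List.exists_cons_of_ne_nil hne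
  exact (isSectorTriple_vbase i).foldl_vstep r hw

theorem stmt16 (w : List (Fin 3)) (hw : w.Chain' (· ≠ ·)) (hne : w ≠ []) (p : Fin 3) :
    Primitive (vComp p (VW w)) ∧ (w.getLast hne = p → Generic (vComp p (VW w))) := by
  refine ⟨(isUnimodularTriple_VW hne).primitive_vComp p, fun hlast => ?_⟩
  obtain ⟨s, hs, -⟩ := isSectorTriple_VW hw hne
  exact generic_of_mem_openSector (hlast ▸ hs)

end
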